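/- arXiv:1203.5505 — 6 statements merged into one kernel-verified Lean document; each statement's English description precedes it below -/
import Mathlib

section
/- Let a,b,c ≥ 2 be integers and let L = L(a,b,c) be the abelian group with generators x₁, x₂, x₃ and relations a·x₁ = b·x₂ = c·x₃ (denote this common element by c⃗, the canonical element). Then every element y of L can be written uniquely in the normal form y = n₁·x₁ + n₂·x₂ + n₃·x₃ + m·c⃗ with integers m, n₁, n₂, n₃ satisfying 0 ≤ n₁ < a, 0 ≤ n₂ < b, 0 ≤ n₃ < c. -/
/-- The subgroup of relations defining L(a,b,c). -/
def LRel (a b c : ℕ) : AddSubgroup (ℤ × ℤ × ℤ) :=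
  AddSubgroup.closure {((a : ℤ), -(b : ℤ), 0), ((0 : ℤ), (b : ℤ), -(c : ℤ))}

/-- The rank-one abelian group L(a,b,c) on generators x₁,x₂,x₃ with a·x₁ = b·x₂ = c·x₃. -/
abbrev LGrp (a b c : ℕ) := (ℤ × ℤ × ℤ) ⧸ LRel a b c

def Lx1 (a b c : ℕ) : LGrp a b c := QuotientAddGroup.mk (1, 0, 0)
def Lx2 (a b c : ℕ) : LGrp a b c := QuotientAddGroup.mk (0, 1, 0)
def Lx3 (a b c : ℕ) : LGrp a b c := QuotientAddGroup.mk (0, 0, 1)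

/-- Canonical element c⃗ = a·x₁. -/
def Lcan (a b c : ℕ) : LGrp a b c := (a : ℤ) • Lx1 a b c

/-- Dualizing element ω = c⃗ − (x₁+x₂+x₃). -/
def Lomega (a b c : ℕ) : LGrp a b c :=
  Lcan a b c - (Lx1 a b c + Lx2 a b c + Lx3 a b c)

/-- Dominant element δ⃗ = c⃗ + 2ω. -/
def Ldelta (a b c : ℕ) : LGrp a b c := Lcan a b c + (2 : ℤ) • Lomega a b c

/-- The partial order on L given by the positive cone ℕx₁+ℕx₂+ℕx₃ : u ≤ v iff v−u ∈ ℕx₁+ℕx₂+ℕx₃. -/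
def Lle (a b c : ℕ) (u v : LGrp a b c) : Prop :=
  ∃ n1 n2 n3 : ℕ,
    v - u = (n1 : ℤ) • Lx1 a b c + (n2 : ℤ) • Lx2 a b c + (n3 : ℤ) • Lx3 a b c

/-!
Write an element of `L(a,b,c)` as the class of `(p, q, r) ∈ ℤ³`. Dividing with remainder and using
`a • x₁ = b • x₂ = c • x₃ = c⃗` gives the normal form with `m = p / a + q / b + r / c` and remainders
`p % a, q % b, r % c`. These four integers do not change when a relation `s • (a, -b, 0) + t • (0, b, -c)`
is added to `(p, q, r)`, so they are functions of the class; on a vector `(n₁ + m a, n₂, n₃)` that is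
already in normal form they return `(m, n₁, n₂, n₃)`, which gives uniqueness.
-/

theorem zsmul_eq_emod_add_ediv_zsmul {G : Type*} [AddCommGroup G] (n k : ℤ) (x : G) :
    n • x = (n % k) • x + (n / k) • (k • x) := by
  rw [smul_smul, ← add_smul, mul_comm, Int.emod_add_mul_ediv]

namespace LGrp

variable {a b c : ℕ}

theorem mk_eq_zsmul_add (p q r : ℤ) :
    (QuotientAddGroup.mk (p, q, r) : LGrp a b c) = p • Lx1 a b c + q • Lx2 a b c + r • Lx3 a b c := by
  simp only [Lx1, Lx2, Lx3, ← QuotientAddGroup.mk_zsmul, ← QuotientAddGroup.mk_add, Prod.smul_mk,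
    smul_eq_mul, Prod.mk_add_mk]
  norm_num

theorem zsmul_Lx2_eq_Lcan : (b : ℤ) • Lx2 a b c = Lcan a b c := by
  rw [Lcan, Lx1, Lx2, ← QuotientAddGroup.mk_zsmul, ← QuotientAddGroup.mk_zsmul,
    QuotientAddGroup.eq_iff_sub_mem]
  convert (LRel a b c).neg_mem (AddSubgroup.subset_closure (Set.mem_insert _ _)) using 1
  simp

theorem zsmul_Lx3_eq_Lcan : (c : ℤ) • Lx3 a b c = Lcan a b c := by
  rw [← zsmul_Lx2_eq_Lcan, Lx2, Lx3, ← QuotientAddGroup.mk_zsmul, ← QuotientAddGroup.mk_zsmul,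
    QuotientAddGroup.eq_iff_sub_mem]
  convert (LRel a b c).neg_mem (AddSubgroup.subset_closure (Set.mem_insert_of_mem _ rfl)) using 1
  simp

theorem zsmul_Lx_add_zsmul_Lcan_eq_mk (m n₁ n₂ n₃ : ℤ) :
    n₁ • Lx1 a b c + n₂ • Lx2 a b c + n₃ • Lx3 a b c + m • Lcan a b c =
      QuotientAddGroup.mk (n₁ + m * a, n₂, n₃) := by
  rw [mk_eq_zsmul_add, Lcan, smul_smul]
  module

theorem mk_eq_emod_zsmul_Lx_add_ediv_zsmul_Lcan (p q r : ℤ) :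
    (QuotientAddGroup.mk (p, q, r) : LGrp a b c) =
      (p % a) • Lx1 a b c + (q % b) • Lx2 a b c + (r % c) • Lx3 a b c
        + (p / a + q / b + r / c) • Lcan a b c := by
  rw [mk_eq_zsmul_add, zsmul_eq_emod_add_ediv_zsmul p a, zsmul_eq_emod_add_ediv_zsmul q b,
    zsmul_eq_emod_add_ediv_zsmul r c, zsmul_Lx2_eq_Lcan, zsmul_Lx3_eq_Lcan, ← Lcan]
  module

end LGrp

def LRel.normalForm (a b c : ℕ) (v : ℤ × ℤ × ℤ) : ℤ × ℤ × ℤ × ℤ :=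
  (v.1 / a + v.2.1 / b + v.2.2 / c, v.1 % a, v.2.1 % b, v.2.2 % c)

namespace LRel

variable {a b c : ℕ}

theorem normalForm_add_of_mem (ha : (a : ℤ) ≠ 0) (hb : (b : ℤ) ≠ 0) (hc : (c : ℤ) ≠ 0)
    {d : ℤ × ℤ × ℤ} (hd : d ∈ LRel a b c) (v : ℤ × ℤ × ℤ) :
    normalForm a b c (v + d) = normalForm a b c v := by
  induction hd using AddSubgroup.closure_induction generalizing v with
  | mem d hd =>
    obtain ⟨p, q, r⟩ := v
    rcases hd with rfl | rfl <;>
    · simp only [normalForm, Prod.mk_add_mk, add_zero, Int.add_ediv_of_dvd_right (dvd_refl _),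
        Int.add_ediv_of_dvd_right (dvd_neg.mpr (dvd_refl _)), Int.ediv_self ha, Int.ediv_self hb,
        Int.neg_ediv_self _ hb, Int.neg_ediv_self _ hc, Int.add_emod_right, Int.add_neg_emod_self]
      ring_nf
  | zero => rw [add_zero]
  | add d e _ _ hd he => rw [← add_assoc, he, hd]
  | neg d _ hd => rw [← hd (v + -d), neg_add_cancel_right]

theorem normalForm_eq_of_mk_eq (ha : (a : ℤ) ≠ 0) (hb : (b : ℤ) ≠ 0) (hc : (c : ℤ) ≠ 0)
    {v w : ℤ × ℤ × ℤ} (h : (QuotientAddGroup.mk v : LGrp a b c) = QuotientAddGroup.mk w) :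
    normalForm a b c v = normalForm a b c w := by
  rw [← normalForm_add_of_mem ha hb hc (QuotientAddGroup.eq_iff_sub_mem.mp h) w,
    add_sub_cancel]

theorem normalForm_of_bounds {m n₁ n₂ n₃ : ℤ} (h₁ : 0 ≤ n₁ ∧ n₁ < a) (h₂ : 0 ≤ n₂ ∧ n₂ < b)
    (h₃ : 0 ≤ n₃ ∧ n₃ < c) : normalForm a b c (n₁ + m * a, n₂, n₃) = (m, n₁, n₂, n₃) := by
  simp only [normalForm, Int.add_mul_ediv_right _ _ (by omega : (a : ℤ) ≠ 0),
    Int.add_mul_emod_self_right, Int.ediv_eq_zero_of_lt h₁.1 h₁.2, Int.ediv_eq_zero_of_lt h₂.1 h₂.2,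
    Int.ediv_eq_zero_of_lt h₃.1 h₃.2, Int.emod_eq_of_lt h₁.1 h₁.2, Int.emod_eq_of_lt h₂.1 h₂.2,
    Int.emod_eq_of_lt h₃.1 h₃.2, zero_add, add_zero]

end LRel

open LGrp LRel in
/-- Every element of L(a,b,c) has a unique normal form
    y = n₁x₁ + n₂x₂ + n₃x₃ + m·c⃗ with 0 ≤ nᵢ < pᵢ. -/
theorem normal_form_unique (a b c : ℕ) (ha : 2 ≤ a) (hb : 2 ≤ b) (hc : 2 ≤ c)
    (y : LGrp a b c) :
    ∃! q : ℤ × ℤ × ℤ × ℤ,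
      (0 ≤ q.2.1 ∧ q.2.1 < (a : ℤ)) ∧ (0 ≤ q.2.2.1 ∧ q.2.2.1 < (b : ℤ)) ∧
      (0 ≤ q.2.2.2 ∧ q.2.2.2 < (c : ℤ)) ∧
      y = q.2.1 • Lx1 a b c + q.2.2.1 • Lx2 a b c + q.2.2.2 • Lx3 a b c
            + q.1 • Lcan a b c := by
  have ha₀ : (0 : ℤ) < a := by omega
  have hb₀ : (0 : ℤ) < b := by omega
  have hc₀ : (0 : ℤ) < c := by omega
  obtain ⟨⟨p, q, r⟩, rfl⟩ := QuotientAddGroup.mk_surjective y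
  refine ⟨normalForm a b c (p, q, r),
    ⟨⟨Int.emod_nonneg _ ha₀.ne', Int.emod_lt_of_pos _ ha₀⟩,
      ⟨Int.emod_nonneg _ hb₀.ne', Int.emod_lt_of_pos _ hb₀⟩,
      ⟨Int.emod_nonneg _ hc₀.ne', Int.emod_lt_of_pos _ hc₀⟩,
      mk_eq_emod_zsmul_Lx_add_ediv_zsmul_Lcan p q r⟩, ?_⟩
  rintro ⟨m, n₁, n₂, n₃⟩ ⟨h₁, h₂, h₃, hy⟩
  rw [zsmul_Lx_add_zsmul_Lcan_eq_mk] at hy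
  rw [normalForm_eq_of_mk_eq ha₀.ne' hb₀.ne' hc₀.ne' hy, normalForm_of_bounds h₁ h₂ h₃]
end

section
/- Let a,b,c ≥ 2 and L = L(a,b,c). Define the positive cone L₊ = { n₁x₁ + n₂x₂ + n₃x₃ : n₁,n₂,n₃ ∈ ℕ } and write y ≥ 0 iff y ∈ L₊. Then an element y ∈ L with normal form y = n₁x₁ + n₂x₂ + n₃x₃ + m·c⃗ (0 ≤ nᵢ < pᵢ, where (p₁,p₂,p₃)=(a,b,c)) satisfies y ≥ 0 if and only if m ≥ 0. -/
/-!
Two representatives of the same element of `L(a,b,c)` differ by `s • (a, -b, 0) + t • (0, b, -c)`.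
If `y = n₁x₁ + n₂x₂ + n₃x₃ + m c⃗` has a representative `(k₁, k₂, k₃) ≥ 0`, then
`k₁ = n₁ + (m + s) a`, `k₂ = n₂ + (t - s) b`, `k₃ = n₃ - t c`, and `0 ≤ nᵢ < pᵢ` forces the
three coefficients `m + s`, `t - s`, `-t` to be nonnegative; their sum is `m`.
-/

lemma Int.nonneg_of_nonneg_add_mul {n p q : ℤ} (hn : 0 ≤ n) (hnp : n < p) (h : 0 ≤ n + q * p) :
    0 ≤ q := by
  by_contra! hq
  nlinarith

section

variable {a b c : ℕ}

lemma mem_LRel_iff {v : ℤ × ℤ × ℤ} :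
    v ∈ LRel a b c ↔ ∃ s t : ℤ, (s * a, (t - s) * b, -(t * c)) = v := by
  rw [LRel, AddSubgroup.mem_closure_pair]
  refine exists₂_congr fun s t => ?_
  simp only [Prod.smul_mk, smul_eq_mul, Prod.mk_add_mk]
  ring_nf

lemma LGrp.coe_eq_coe_iff {u v : ℤ × ℤ × ℤ} :
    (u : LGrp a b c) = v ↔ ∃ s t : ℤ,
      v.1 = u.1 + s * a ∧ v.2.1 = u.2.1 + (t - s) * b ∧ v.2.2 = u.2.2 - t * c := by
  rw [QuotientAddGroup.eq, mem_LRel_iff]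
  refine exists₂_congr fun s t => ?_
  simp only [Prod.ext_iff, Prod.fst_add, Prod.snd_add, Prod.fst_neg, Prod.snd_neg]
  constructor <;> rintro ⟨h₁, h₂, h₃⟩ <;> refine ⟨?_, ?_, ?_⟩ <;> linarith

lemma zsmul_Lx_add (n₁ n₂ n₃ : ℤ) :
    n₁ • Lx1 a b c + n₂ • Lx2 a b c + n₃ • Lx3 a b c = ((n₁, n₂, n₃) : ℤ × ℤ × ℤ) := by
  simp only [Lx1, Lx2, Lx3, ← QuotientAddGroup.mk_zsmul, ← QuotientAddGroup.mk_add,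
    Prod.smul_mk, smul_eq_mul, Prod.mk_add_mk]
  simp

lemma zsmul_Lcan (m : ℤ) : m • Lcan a b c = ((m * a, 0, 0) : ℤ × ℤ × ℤ) := by
  rw [Lcan, smul_smul, Lx1, ← QuotientAddGroup.mk_zsmul]
  simp

lemma Lle_zero_coe_iff {v : ℤ × ℤ × ℤ} :
    Lle a b c 0 v ↔ ∃ s t : ℤ,
      0 ≤ v.1 + s * a ∧ 0 ≤ v.2.1 + (t - s) * b ∧ 0 ≤ v.2.2 - t * c := by
  simp only [Lle, sub_zero, zsmul_Lx_add, LGrp.coe_eq_coe_iff]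
  constructor
  · rintro ⟨k₁, k₂, k₃, s, t, h₁, h₂, h₃⟩
    exact ⟨s, t, h₁ ▸ k₁.cast_nonneg, h₂ ▸ k₂.cast_nonneg, h₃ ▸ k₃.cast_nonneg⟩
  · rintro ⟨s, t, h₁, h₂, h₃⟩
    exact ⟨_, _, _, s, t, Int.toNat_of_nonneg h₁, Int.toNat_of_nonneg h₂, Int.toNat_of_nonneg h₃⟩

end

theorem nonneg_iff_m_nonneg_general (a b c : ℕ)
    (m n1 n2 n3 : ℤ)
    (h1 : 0 ≤ n1 ∧ n1 < (a : ℤ)) (h2 : 0 ≤ n2 ∧ n2 < (b : ℤ))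
    (h3 : 0 ≤ n3 ∧ n3 < (c : ℤ)) :
    Lle a b c 0 (n1 • Lx1 a b c + n2 • Lx2 a b c + n3 • Lx3 a b c + m • Lcan a b c)
      ↔ 0 ≤ m := by
  rw [zsmul_Lx_add, zsmul_Lcan, ← QuotientAddGroup.mk_add, Lle_zero_coe_iff]
  simp only [Prod.mk_add_mk, add_zero]
  constructor
  · rintro ⟨s, t, hx₁, hx₂, hx₃⟩
    have hms : 0 ≤ m + s := Int.nonneg_of_nonneg_add_mul h1.1 h1.2 (by linarith)
    have hts : 0 ≤ t - s := Int.nonneg_of_nonneg_add_mul h2.1 h2.2 hx₂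
    have ht : 0 ≤ -t := Int.nonneg_of_nonneg_add_mul h3.1 h3.2 (by linarith)
    linarith
  · intro hm
    refine ⟨0, 0, ?_⟩
    simp only [zero_mul, add_zero, sub_zero]
    exact ⟨add_nonneg h1.1 (by positivity), h2.1, h3.1⟩

/-- An element in normal form n₁x₁+n₂x₂+n₃x₃+m·c⃗ (0 ≤ nᵢ < pᵢ) is ≥ 0 iff m ≥ 0. -/
theorem nonneg_iff_m_nonneg (a b c : ℕ) (ha : 2 ≤ a) (hb : 2 ≤ b) (hc : 2 ≤ c)
    (m n1 n2 n3 : ℤ)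
    (h1 : 0 ≤ n1 ∧ n1 < (a : ℤ)) (h2 : 0 ≤ n2 ∧ n2 < (b : ℤ))
    (h3 : 0 ≤ n3 ∧ n3 < (c : ℤ)) :
    Lle a b c 0 (n1 • Lx1 a b c + n2 • Lx2 a b c + n3 • Lx3 a b c + m • Lcan a b c)
      ↔ 0 ≤ m :=
  nonneg_iff_m_nonneg_general a b c m n1 n2 n3 h1 h2 h3
end

section
/- Let a,b,c ≥ 2 and L = L(a,b,c) with dominant element δ⃗ := c⃗ + 2ω, where ω = c⃗ − (x₁+x₂+x₃). Then δ⃗ = (a−2)x₁ + (b−2)x₂ + (c−2)x₃, and an element x ∈ L satisfies 0 ≤ x ≤ δ⃗ if and only if x = ℓ₁x₁ + ℓ₂x₂ + ℓ₃x₃ with 0 ≤ ℓ₁ ≤ a−2, 0 ≤ ℓ₂ ≤ b−2, 0 ≤ ℓ₃ ≤ c−2; moreover this representation is unique. -/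
lemma mem_LRel (a b c : ℕ) (v : ℤ × ℤ × ℤ) :
    v ∈ LRel a b c ↔ ∃ p q : ℤ, v = (p * a, (q - p) * b, -(q * c)) := by
  rw [LRel, AddSubgroup.mem_closure_pair]
  constructor
  · rintro ⟨m, n, rfl⟩
    exact ⟨m, n, by simp [Prod.ext_iff]; ring⟩
  · rintro ⟨p, q, rfl⟩
    exact ⟨p, q, by simp [Prod.ext_iff]; ring⟩

lemma combo (a b c : ℕ) (z1 z2 z3 : ℤ) :
    z1 • Lx1 a b c + z2 • Lx2 a b c + z3 • Lx3 a b c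
      = QuotientAddGroup.mk (z1, z2, z3) := by
  have h : ∀ v : ℤ × ℤ × ℤ, ∀ z : ℤ,
      z • (QuotientAddGroup.mk v : LGrp a b c) = QuotientAddGroup.mk (z • v) := by
    intro v z; rfl
  simp only [Lx1, Lx2, Lx3, h, ← QuotientAddGroup.mk_add, Prod.smul_mk, smul_eq_mul,
    mul_one, mul_zero, Prod.mk_add_mk, add_zero, zero_add]

lemma mk_eq (a b c : ℕ) (u v : ℤ × ℤ × ℤ) :
    (QuotientAddGroup.mk u : LGrp a b c) = QuotientAddGroup.mk v ↔ v - u ∈ LRel a b c := by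
  rw [QuotientAddGroup.eq, show -u + v = v - u from by abel]

lemma pq_zero (A B C p q : ℤ) (hA : 2 ≤ A) (hB : 2 ≤ B) (hC : 2 ≤ C)
    (h1 : p * A ≤ A - 2) (h2 : (q - p) * B ≤ B - 2) (h3 : -(q * C) ≤ C - 2) :
    p = 0 ∧ q = 0 := by
  have hp : p ≤ 0 := by
    by_contra h; push_neg at h
    nlinarith [mul_nonneg (by linarith : (0:ℤ) ≤ p - 1) (by linarith : (0:ℤ) ≤ A)]
  have hq : 0 ≤ q := by
    by_contra h; push_neg at h
    nlinarith [mul_nonneg (by linarith : (0:ℤ) ≤ -q - 1) (by linarith : (0:ℤ) ≤ C)]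
  have hqp : q - p ≤ 0 := by
    by_contra h; push_neg at h
    nlinarith [mul_nonneg (by linarith : (0:ℤ) ≤ q - p - 1) (by linarith : (0:ℤ) ≤ B)]
  omega

lemma p_zero_of_abs (A p d : ℤ) (hA : 2 ≤ A) (hd : d = p * A)
    (h1 : -(A - 2) ≤ d) (h2 : d ≤ A - 2) : p = 0 := by
  by_contra h
  rcases lt_or_gt_of_ne h with h' | h'
  · nlinarith [mul_nonneg (by linarith : (0:ℤ) ≤ -p - 1) (by linarith : (0:ℤ) ≤ A)]
  · nlinarith [mul_nonneg (by linarith : (0:ℤ) ≤ p - 1) (by linarith : (0:ℤ) ≤ A)]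

/-- δ⃗ = (a−2)x₁+(b−2)x₂+(c−2)x₃, and 0 ≤ x ≤ δ⃗ iff x = ℓ₁x₁+ℓ₂x₂+ℓ₃x₃ with
    0 ≤ ℓᵢ ≤ pᵢ−2, and the representation is unique. -/
theorem dominant_interval (a b c : ℕ) (ha : 2 ≤ a) (hb : 2 ≤ b) (hc : 2 ≤ c) :
    Ldelta a b c = ((a : ℤ) - 2) • Lx1 a b c + ((b : ℤ) - 2) • Lx2 a b c
        + ((c : ℤ) - 2) • Lx3 a b c ∧
    ∀ x : LGrp a b c,
      (Lle a b c 0 x ∧ Lle a b c x (Ldelta a b c)) ↔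
      (∃! l : ℤ × ℤ × ℤ,
        (0 ≤ l.1 ∧ l.1 ≤ (a : ℤ) - 2) ∧ (0 ≤ l.2.1 ∧ l.2.1 ≤ (b : ℤ) - 2) ∧
        (0 ≤ l.2.2 ∧ l.2.2 ≤ (c : ℤ) - 2) ∧
        x = l.1 • Lx1 a b c + l.2.1 • Lx2 a b c + l.2.2 • Lx3 a b c) := by
  have haz : (2:ℤ) ≤ (a:ℤ) := by exact_mod_cast ha
  have hbz : (2:ℤ) ≤ (b:ℤ) := by exact_mod_cast hb
  have hcz : (2:ℤ) ≤ (c:ℤ) := by exact_mod_cast hc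
  have hsm : ∀ (z : ℤ) (v : ℤ × ℤ × ℤ),
      z • (QuotientAddGroup.mk v : LGrp a b c) = QuotientAddGroup.mk (z • v) :=
    fun z v => rfl
  have hcan : Lcan a b c = QuotientAddGroup.mk ((a:ℤ), 0, 0) := by
    rw [Lcan, Lx1, hsm]; congr 1; simp
  have homega : Lomega a b c = QuotientAddGroup.mk ((a:ℤ) - 1, -1, -1) := by
    rw [Lomega, hcan, Lx1, Lx2, Lx3, ← QuotientAddGroup.mk_add, ← QuotientAddGroup.mk_add,
      ← QuotientAddGroup.mk_sub]
    congr 1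
  have hdelta : Ldelta a b c = QuotientAddGroup.mk (3*(a:ℤ) - 2, -2, -2) := by
    rw [Ldelta, hcan, homega, hsm, ← QuotientAddGroup.mk_add]
    congr 1
    simp [Prod.ext_iff]; ring
  have hδ2 : Ldelta a b c = QuotientAddGroup.mk ((a:ℤ) - 2, (b:ℤ) - 2, (c:ℤ) - 2) := by
    rw [hdelta, mk_eq, mem_LRel]
    exact ⟨-2, -1, by simp [Prod.ext_iff]; ring⟩
  constructor
  · rw [combo, hδ2]
  intro x
  constructor
  · rintro ⟨⟨n1, n2, n3, h1⟩, ⟨m1, m2, m3, h2⟩⟩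
    rw [sub_zero, combo] at h1
    rw [combo] at h2
    have hsum : (QuotientAddGroup.mk ((n1:ℤ) + m1, (n2:ℤ) + m2, (n3:ℤ) + m3) : LGrp a b c)
        = QuotientAddGroup.mk ((a:ℤ) - 2, (b:ℤ) - 2, (c:ℤ) - 2) := by
      rw [← hδ2, sub_eq_iff_eq_add.mp h2, h1, ← QuotientAddGroup.mk_add]
      congr 1
      simp only [Prod.mk_add_mk, Prod.mk.injEq]
      refine ⟨by ring, by ring, by ring⟩
    rw [mk_eq, mem_LRel] at hsum
    obtain ⟨p, q, hpq⟩ := hsum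
    simp only [Prod.mk_sub_mk, Prod.mk.injEq] at hpq
    obtain ⟨e1, e2, e3⟩ := hpq
    obtain ⟨hp0, hq0⟩ := pq_zero (a:ℤ) (b:ℤ) (c:ℤ) p q haz hbz hcz
      (by rw [← e1]; linarith [Int.natCast_nonneg n1, Int.natCast_nonneg m1])
      (by rw [← e2]; linarith [Int.natCast_nonneg n2, Int.natCast_nonneg m2])
      (by rw [← e3]; linarith [Int.natCast_nonneg n3, Int.natCast_nonneg m3])
    subst hp0; subst hq0
    simp only [zero_mul, mul_zero, neg_zero, zero_sub, sub_zero] at e1 e2 e3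
    refine ⟨((n1:ℤ), (n2:ℤ), (n3:ℤ)), ⟨⟨by positivity, by linarith [Int.natCast_nonneg m1]⟩,
      ⟨by positivity, by linarith [Int.natCast_nonneg m2]⟩,
      ⟨by positivity, by linarith [Int.natCast_nonneg m3]⟩, by rw [combo]; exact h1⟩, ?_⟩
    rintro ⟨l1, l2, l3⟩ ⟨⟨g1a, g1b⟩, ⟨g2a, g2b⟩, ⟨g3a, g3b⟩, hx⟩
    simp only [Prod.fst, Prod.snd] at g1a g1b g2a g2b g3a g3b
    rw [combo, h1, mk_eq, mem_LRel] at hx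
    obtain ⟨p, q, hpq⟩ := hx
    simp only [Prod.mk_sub_mk, Prod.mk.injEq] at hpq
    obtain ⟨f1, f2, f3⟩ := hpq
    have hn1 : (0:ℤ) ≤ (n1:ℤ) ∧ (n1:ℤ) ≤ (a:ℤ) - 2 := by
      constructor
      · positivity
      · linarith [Int.natCast_nonneg m1]
    have hn3 : (0:ℤ) ≤ (n3:ℤ) ∧ (n3:ℤ) ≤ (c:ℤ) - 2 := by
      constructor
      · positivity
      · linarith [Int.natCast_nonneg m3]
    have hp : p = 0 := p_zero_of_abs (a:ℤ) p (l1 - (n1:ℤ)) haz f1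
      (by linarith [hn1.1, hn1.2]) (by linarith [hn1.1, hn1.2])
    have hq : q = 0 := by
      have h0 : -q = 0 := p_zero_of_abs (c:ℤ) (-q) (l3 - (n3:ℤ)) hcz (by rw [f3]; ring)
        (by linarith [hn3.1, hn3.2]) (by linarith [hn3.1, hn3.2])
      omega
    subst hp; subst hq
    simp only [zero_mul, mul_zero, neg_zero, sub_zero, zero_sub] at f1 f2 f3
    simp [Prod.ext_iff]; omega
  · rintro ⟨⟨l1, l2, l3⟩, ⟨⟨b1a, b1b⟩, ⟨b2a, b2b⟩, ⟨b3a, b3b⟩, hx⟩, -⟩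
    constructor
    · exact ⟨l1.toNat, l2.toNat, l3.toNat, by
        rw [sub_zero, Int.toNat_of_nonneg b1a, Int.toNat_of_nonneg b2a,
          Int.toNat_of_nonneg b3a]; exact hx⟩
    · refine ⟨((a:ℤ) - 2 - l1).toNat, ((b:ℤ) - 2 - l2).toNat, ((c:ℤ) - 2 - l3).toNat, ?_⟩
      rw [Int.toNat_of_nonneg (by linarith : (0:ℤ) ≤ (a:ℤ) - 2 - l1),
        Int.toNat_of_nonneg (by linarith : (0:ℤ) ≤ (b:ℤ) - 2 - l2),
        Int.toNat_of_nonneg (by linarith : (0:ℤ) ≤ (c:ℤ) - 2 - l3),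
        combo, hx, combo, hδ2, ← QuotientAddGroup.mk_sub]
      congr 1
end

section
/- Let b,c ≥ 3 and consider L = L(2,b,c) with dualizing element ω, dominant element δ⃗ = (b−2)x₂ + (c−2)x₃, and Φ = {x ∈ L : 0 ≤ x ≤ δ⃗}. Let U = ℤx₁ + ℤω. Then Φ + U = L. -/
lemma mk_eq_mk (a b c : ℕ) (p q : ℤ × ℤ × ℤ) (s t : ℤ)
    (h : -p + q = s • ((a : ℤ), -(b : ℤ), (0:ℤ)) + t • ((0 : ℤ), (b : ℤ), -(c : ℤ))) :
    (QuotientAddGroup.mk p : LGrp a b c) = QuotientAddGroup.mk q := by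
  rw [QuotientAddGroup.eq, h]
  exact add_mem (AddSubgroup.zsmul_mem _ (AddSubgroup.subset_closure (by simp)) s)
    (AddSubgroup.zsmul_mem _ (AddSubgroup.subset_closure (by simp)) t)

lemma comb (a b c : ℕ) (a₁ a₂ a₃ : ℤ) :
    a₁ • Lx1 a b c + a₂ • Lx2 a b c + a₃ • Lx3 a b c
      = QuotientAddGroup.mk (a₁, a₂, a₃) := by
  unfold Lx1 Lx2 Lx3
  rw [← QuotientAddGroup.mk_zsmul, ← QuotientAddGroup.mk_zsmul, ← QuotientAddGroup.mk_zsmul,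
    ← QuotientAddGroup.mk_add, ← QuotientAddGroup.mk_add]
  congr 1
  simp [Prod.ext_iff]

lemma omega_mk (b c : ℕ) : Lomega 2 b c = QuotientAddGroup.mk (1, -1, -1) := by
  unfold Lomega Lcan Lx1 Lx2 Lx3
  rw [← QuotientAddGroup.mk_zsmul, ← QuotientAddGroup.mk_add, ← QuotientAddGroup.mk_add,
    ← QuotientAddGroup.mk_sub]
  congr 1

lemma delta_mk (b c : ℕ) : Ldelta 2 b c = QuotientAddGroup.mk (4, -2, -2) := by
  unfold Ldelta Lcan Lx1
  rw [omega_mk, ← QuotientAddGroup.mk_zsmul, ← QuotientAddGroup.mk_zsmul,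
    ← QuotientAddGroup.mk_add]
  congr 1

lemma step_ne (d : ℕ) (a j : ℤ) (hd : 3 ≤ d) (ha : a % d = 0) (hj1 : 0 < j) (hj2 : j < 3) :
    (a + j) % d ≠ 0 := by
  intro h
  have h1 : (d : ℤ) ∣ a := Int.dvd_of_emod_eq_zero ha
  have h2 : (d : ℤ) ∣ a + j := Int.dvd_of_emod_eq_zero h
  have h3 : (d : ℤ) ∣ j := by
    have := dvd_sub h2 h1
    simpa using this
  have := Int.le_of_dvd hj1 h3
  omega

/-- For weight type (2,b,c) with b,c ≥ 3: with U = ℤx₁+ℤω and Φ = {x : 0 ≤ x ≤ δ⃗},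
    one has Φ + U = L. -/
theorem shift_cuboid_2bc (b c : ℕ) (hb : 3 ≤ b) (hc : 3 ≤ c) (y : LGrp 2 b c) :
    ∃ x : LGrp 2 b c, (Lle 2 b c 0 x ∧ Lle 2 b c x (Ldelta 2 b c)) ∧
      ∃ m k : ℤ, y = x + (m • Lx1 2 b c + k • Lomega 2 b c) := by
  obtain ⟨⟨n₁, n₂, n₃⟩, rfl⟩ := QuotientAddGroup.mk_surjective y
  have hb' : (3 : ℤ) ≤ (b : ℤ) := by exact_mod_cast hb
  have hc' : (3 : ℤ) ≤ (c : ℤ) := by exact_mod_cast hc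
  have hbpos : (0 : ℤ) < b := by omega
  have hcpos : (0 : ℤ) < c := by omega
  have key : ∃ k : ℤ, (n₂ + k + 1) % b ≠ 0 ∧ (n₃ + k + 1) % c ≠ 0 := by
    by_cases hA0 : (n₂ + 1) % b = 0
    · have hA1 : (n₂ + 1 + 1) % b ≠ 0 := step_ne b (n₂ + 1) 1 hb hA0 one_pos (by norm_num)
      have hA2 : (n₂ + 1 + 2) % b ≠ 0 :=
        step_ne b (n₂ + 1) 2 hb hA0 (by norm_num) (by norm_num)
      by_cases hB1 : (n₃ + 1 + 1) % c = 0
      · refine ⟨2, ?_, ?_⟩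
        · rw [show n₂ + 2 + 1 = n₂ + 1 + 2 by ring]; exact hA2
        · rw [show n₃ + 2 + 1 = n₃ + 1 + 1 + 1 by ring]
          exact step_ne c (n₃ + 1 + 1) 1 hc hB1 one_pos (by norm_num)
      · exact ⟨1, hA1, hB1⟩
    · by_cases hB0 : (n₃ + 1) % c = 0
      · have hB1 : (n₃ + 1 + 1) % c ≠ 0 := step_ne c (n₃ + 1) 1 hc hB0 one_pos (by norm_num)
        have hB2 : (n₃ + 1 + 2) % c ≠ 0 :=
          step_ne c (n₃ + 1) 2 hc hB0 (by norm_num) (by norm_num)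
        by_cases hA1 : (n₂ + 1 + 1) % b = 0
        · refine ⟨2, ?_, ?_⟩
          · rw [show n₂ + 2 + 1 = n₂ + 1 + 1 + 1 by ring]
            exact step_ne b (n₂ + 1 + 1) 1 hb hA1 one_pos (by norm_num)
          · rw [show n₃ + 2 + 1 = n₃ + 1 + 2 by ring]; exact hB2
        · exact ⟨1, hA1, hB1⟩
      · exact ⟨0, by simpa using hA0, by simpa using hB0⟩
  obtain ⟨k, hk2, hk3⟩ := key
  set ℓ₂ : ℤ := (n₂ + k) % b with hℓ₂
  set ℓ₃ : ℤ := (n₃ + k) % c with hℓ₃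
  have hℓ₂0 : 0 ≤ ℓ₂ := Int.emod_nonneg _ (by omega)
  have hℓ₃0 : 0 ≤ ℓ₃ := Int.emod_nonneg _ (by omega)
  have hℓ₂lt : ℓ₂ < b := Int.emod_lt_of_pos _ hbpos
  have hℓ₃lt : ℓ₃ < c := Int.emod_lt_of_pos _ hcpos
  have hℓ₂ne : ℓ₂ ≠ (b : ℤ) - 1 := by
    intro h
    apply hk2
    have h1 : (1 : ℤ) % b = 1 := Int.emod_eq_of_lt (by norm_num) (by omega)
    have h2 : (n₂ + k + 1) % b = (ℓ₂ + 1 % b) % b := by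
      rw [hℓ₂, Int.add_emod (n₂ + k) 1 b]
    rw [h2, h, h1, show (b : ℤ) - 1 + 1 = b by ring, Int.emod_self]
  have hℓ₃ne : ℓ₃ ≠ (c : ℤ) - 1 := by
    intro h
    apply hk3
    have h1 : (1 : ℤ) % c = 1 := Int.emod_eq_of_lt (by norm_num) (by omega)
    have h2 : (n₃ + k + 1) % c = (ℓ₃ + 1 % c) % c := by
      rw [hℓ₃, Int.add_emod (n₃ + k) 1 c]
    rw [h2, h, h1, show (c : ℤ) - 1 + 1 = c by ring, Int.emod_self]
  have hℓ₂le : ℓ₂ ≤ (b : ℤ) - 2 := by omega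
  have hℓ₃le : ℓ₃ ≤ (c : ℤ) - 2 := by omega
  set t₂ : ℤ := (n₂ + k) / b with ht₂
  set t₃ : ℤ := (n₃ + k) / c with ht₃
  have hdiv₂ : (b : ℤ) * t₂ + ℓ₂ = n₂ + k := Int.mul_ediv_add_emod _ _
  have hdiv₃ : (c : ℤ) * t₃ + ℓ₃ = n₃ + k := Int.mul_ediv_add_emod _ _
  clear_value ℓ₂ ℓ₃ t₂ t₃
  refine ⟨QuotientAddGroup.mk (0, ℓ₂, ℓ₃), ⟨⟨0, ℓ₂.toNat, ℓ₃.toNat, ?_⟩,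
    ⟨0, ((b : ℤ) - 2 - ℓ₂).toNat, ((c : ℤ) - 2 - ℓ₃).toNat, ?_⟩⟩,
    n₁ - k + 2 * t₂ + 2 * t₃, k, ?_⟩
  · rw [comb, sub_zero]
    congr 1
    simp [Prod.ext_iff, Int.toNat_of_nonneg hℓ₂0, Int.toNat_of_nonneg hℓ₃0]
  · rw [comb, delta_mk, ← QuotientAddGroup.mk_sub]
    refine mk_eq_mk 2 b c _ _ (-2) (-1) ?_
    simp only [Prod.mk_sub_mk, Prod.neg_mk, Prod.mk_add_mk, Prod.smul_mk, smul_eq_mul,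
      Prod.mk.injEq]
    refine ⟨by norm_num, by omega, by omega⟩
  · rw [omega_mk]
    unfold Lx1
    rw [← QuotientAddGroup.mk_zsmul, ← QuotientAddGroup.mk_zsmul, ← QuotientAddGroup.mk_add,
      ← QuotientAddGroup.mk_add]
    refine mk_eq_mk 2 b c _ _ (t₂ + t₃) t₃ ?_
    simp only [Prod.mk_sub_mk, Prod.neg_mk, Prod.mk_add_mk, Prod.smul_mk, smul_eq_mul,
      Prod.mk.injEq]
    refine ⟨by ring, by linear_combination hdiv₂, by linear_combination hdiv₃⟩
end

section
/- Let a,b,c ≥ 3 with (a,b,c) ≠ (3,3,3), and consider L = L(a,b,c) with dualizing element ω, dominant element δ⃗ = (a−2)x₁+(b−2)x₂+(c−2)x₃, and Φ = {x ∈ L : 0 ≤ x ≤ δ⃗}. Let U = ℤc⃗ + ℤω. Then Φ + U = L. Moreover, for (a,b,c) = (3,3,3) this fails: the element 2x₁ + x₂ does not lie in Φ + U. -/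
/-! Adding `k • ω` to `u₁x₁ + u₂x₂ + u₃x₃` shifts every coefficient by `-k` (modulo `c⃗`), so `y`
lies in `Φ + U` as soon as some `k` avoids `uᵢ + k ≡ -1 (mod pᵢ)` for all three `i`: the reduced
coefficients then lie in `[0, pᵢ - 2]`. The bad `k` form three residue classes of densities
`1/a, 1/b, 1/c`, which cannot cover `ℤ` when `1/a + 1/b + 1/c < 1`, i.e. when `(a,b,c) ≠ (3,3,3)`.
Conversely, the degree and the residues mod `pᵢ` show that `Φ` is exactly that cuboid. For
`(3,3,3)` it is the cube `{0,1}³`, while the residues `(2,1,0)` of `2x₁ + x₂` stay pairwise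
distinct under every shift. -/

open Finset

lemma mul_add_mul_add_mul_lt_mul_mul {a b c : ℕ} (ha : 3 ≤ a) (hb : 3 ≤ b) (hc : 3 ≤ c)
    (hne : ¬(a = 3 ∧ b = 3 ∧ c = 3)) : b * c + a * c + a * b < a * b * c := by
  rcases (by omega : 4 ≤ a ∨ 4 ≤ b ∨ 4 ≤ c) with h | h | h <;>
    nlinarith [Nat.mul_le_mul ha hb, Nat.mul_le_mul hb hc, Nat.mul_le_mul ha hc]

lemma Nat.card_filter_range_modEq {N m p : ℕ} (hp : 0 < p) (hN : N = m * p) (r : ℕ) :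
    #{k ∈ range N | k ≡ r [MOD p]} = m := by
  rw [← Nat.count_eq_card_filter_range, Nat.count_modEq_card _ hp, hN, Nat.mul_mod_left,
    Nat.mul_div_cancel _ hp]
  simp

lemma Nat.exists_not_modEq_of_mul_add_mul_add_mul_lt {a b c : ℕ} (ha : 0 < a) (hb : 0 < b)
    (hc : 0 < c) (h : b * c + a * c + a * b < a * b * c) (r₁ r₂ r₃ : ℕ) :
    ∃ k : ℕ, ¬k ≡ r₁ [MOD a] ∧ ¬k ≡ r₂ [MOD b] ∧ ¬k ≡ r₃ [MOD c] := by
  by_contra! hcover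
  have hcard : #(range (a * b * c)) ≤ #{k ∈ range (a * b * c) | k ≡ r₁ [MOD a]} +
      #{k ∈ range (a * b * c) | k ≡ r₂ [MOD b]} + #{k ∈ range (a * b * c) | k ≡ r₃ [MOD c]} := by
    refine (card_le_card fun k hk => ?_).trans
      ((card_union_le _ _).trans (Nat.add_le_add_right (card_union_le _ _) _))
    simp only [mem_union, mem_filter]
    tauto
  rw [card_range, Nat.card_filter_range_modEq ha (by ring : a * b * c = b * c * a),
    Nat.card_filter_range_modEq hb (by ring : a * b * c = a * c * b),
    Nat.card_filter_range_modEq hc rfl] at hcard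
  omega

lemma Int.exists_natCast_modEq {p : ℕ} (hp : 0 < p) (r : ℤ) : ∃ n : ℕ, (n : ℤ) ≡ r [ZMOD p] :=
  ⟨(r % p).toNat, by
    rw [Int.toNat_of_nonneg (Int.emod_nonneg r (by omega))]
    exact Int.mod_modEq r p⟩

lemma Int.exists_not_modEq_of_mul_add_mul_add_mul_lt {a b c : ℕ} (ha : 0 < a) (hb : 0 < b)
    (hc : 0 < c) (h : b * c + a * c + a * b < a * b * c) (r₁ r₂ r₃ : ℤ) :
    ∃ k : ℤ, ¬k ≡ r₁ [ZMOD a] ∧ ¬k ≡ r₂ [ZMOD b] ∧ ¬k ≡ r₃ [ZMOD c] := by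
  obtain ⟨n₁, hn₁⟩ := Int.exists_natCast_modEq ha r₁
  obtain ⟨n₂, hn₂⟩ := Int.exists_natCast_modEq hb r₂
  obtain ⟨n₃, hn₃⟩ := Int.exists_natCast_modEq hc r₃
  obtain ⟨k, hk₁, hk₂, hk₃⟩ := Nat.exists_not_modEq_of_mul_add_mul_add_mul_lt ha hb hc h n₁ n₂ n₃
  exact ⟨k, fun h => hk₁ (Int.natCast_modEq_iff.mp (h.trans hn₁.symm)),
    fun h => hk₂ (Int.natCast_modEq_iff.mp (h.trans hn₂.symm)),
    fun h => hk₃ (Int.natCast_modEq_iff.mp (h.trans hn₃.symm))⟩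

lemma Int.exists_add_eq_mul_add_of_not_modEq {p : ℕ} (hp : 0 < p) {u k : ℤ}
    (h : ¬k ≡ -1 - u [ZMOD p]) : ∃ q : ℤ, ∃ ℓ : ℕ, ℓ + 2 ≤ p ∧ u + k = p * q + ℓ := by
  have hdiv := Int.mul_ediv_add_emod (u + k) p
  have hnonneg := Int.emod_nonneg (u + k) (by omega : (p : ℤ) ≠ 0)
  have hlt := Int.emod_lt_of_pos (u + k) (by omega : (0 : ℤ) < p)
  have hne : (u + k) % p ≠ p - 1 := fun heq =>
    h (Int.modEq_iff_dvd.mpr ⟨-((u + k) / p) - 1, by linear_combination hdiv - heq⟩)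
  refine ⟨(u + k) / p, ((u + k) % p).toNat, by omega, ?_⟩
  rw [Int.toNat_of_nonneg hnonneg, hdiv]

section Relations

variable (a b c : ℕ)

lemma mk_eq_zsmul_Lx (u : ℤ × ℤ × ℤ) :
    (QuotientAddGroup.mk u : LGrp a b c) =
      u.1 • Lx1 a b c + u.2.1 • Lx2 a b c + u.2.2 • Lx3 a b c := by
  simp only [Lx1, Lx2, Lx3, ← QuotientAddGroup.mk_zsmul, ← QuotientAddGroup.mk_add]
  simp

lemma Lcan_eq_zsmul_Lx1 : Lcan a b c = (a : ℤ) • Lx1 a b c := rfl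

lemma Lcan_eq_zsmul_Lx2 : Lcan a b c = (b : ℤ) • Lx2 a b c := by
  rw [Lcan, Lx1, Lx2, ← QuotientAddGroup.mk_zsmul, ← QuotientAddGroup.mk_zsmul, eq_comm,
    QuotientAddGroup.eq]
  refine AddSubgroup.subset_closure (Or.inl ?_)
  ext <;> simp

lemma zsmul_Lx2_eq_zsmul_Lx3 : (b : ℤ) • Lx2 a b c = (c : ℤ) • Lx3 a b c := by
  rw [Lx2, Lx3, ← QuotientAddGroup.mk_zsmul, ← QuotientAddGroup.mk_zsmul, eq_comm,
    QuotientAddGroup.eq]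
  refine AddSubgroup.subset_closure (Or.inr ?_)
  ext <;> simp

lemma Lcan_eq_zsmul_Lx3 : Lcan a b c = (c : ℤ) • Lx3 a b c :=
  (Lcan_eq_zsmul_Lx2 a b c).trans (zsmul_Lx2_eq_zsmul_Lx3 a b c)

lemma Ldelta_eq :
    Ldelta a b c =
      ((a : ℤ) - 2) • Lx1 a b c + ((b : ℤ) - 2) • Lx2 a b c + ((c : ℤ) - 2) • Lx3 a b c := by
  rw [Ldelta, Lomega]
  linear_combination (norm := module)
    Lcan_eq_zsmul_Lx1 a b c + Lcan_eq_zsmul_Lx2 a b c + Lcan_eq_zsmul_Lx3 a b c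

lemma zsmul_Lx_eq_add (u₁ u₂ u₃ ℓ₁ ℓ₂ ℓ₃ q₁ q₂ q₃ k : ℤ)
    (h₁ : u₁ + k = a * q₁ + ℓ₁) (h₂ : u₂ + k = b * q₂ + ℓ₂) (h₃ : u₃ + k = c * q₃ + ℓ₃) :
    u₁ • Lx1 a b c + u₂ • Lx2 a b c + u₃ • Lx3 a b c =
      (ℓ₁ • Lx1 a b c + ℓ₂ • Lx2 a b c + ℓ₃ • Lx3 a b c) +
        ((q₁ + q₂ + q₃ - k) • Lcan a b c + k • Lomega a b c) := by
  rw [Lomega, eq_sub_of_add_eq h₁, eq_sub_of_add_eq h₂, eq_sub_of_add_eq h₃]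
  linear_combination (norm := module)
    -(q₁ • Lcan_eq_zsmul_Lx1 a b c + q₂ • Lcan_eq_zsmul_Lx2 a b c + q₃ • Lcan_eq_zsmul_Lx3 a b c)

end Relations

def Ldegree (a b c : ℕ) : LGrp a b c →+ ℤ :=
  QuotientAddGroup.lift (LRel a b c)
    (AddMonoidHom.mk' (fun u => u.1 * (b * c) + u.2.1 * (a * c) + u.2.2 * (a * b))
      fun u v => by simp only [Prod.fst_add, Prod.snd_add]; ring)
    (by
      rw [LRel, AddSubgroup.closure_le]
      rintro _ (rfl | rfl) <;> simp only [SetLike.mem_coe, AddMonoidHom.mem_ker,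
        AddMonoidHom.mk'_apply] <;> ring)

def Lresidue (a b c : ℕ) : LGrp a b c →+ ZMod a × ZMod b × ZMod c :=
  QuotientAddGroup.lift (LRel a b c)
    (AddMonoidHom.mk' (fun u => ((u.1 : ZMod a), (u.2.1 : ZMod b), (u.2.2 : ZMod c)))
      fun u v => by simp only [Prod.fst_add, Prod.snd_add, Int.cast_add, Prod.mk_add_mk])
    (by
      rw [LRel, AddSubgroup.closure_le]
      rintro _ (rfl | rfl) <;> simp)

section Invariants

variable (a b c : ℕ)

lemma Ldegree_zsmul_Lx (u₁ u₂ u₃ : ℤ) :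
    Ldegree a b c (u₁ • Lx1 a b c + u₂ • Lx2 a b c + u₃ • Lx3 a b c) =
      u₁ * (b * c) + u₂ * (a * c) + u₃ * (a * b) := by
  simp [Ldegree, Lx1, Lx2, Lx3]

lemma Lresidue_zsmul_Lx (u₁ u₂ u₃ : ℤ) :
    Lresidue a b c (u₁ • Lx1 a b c + u₂ • Lx2 a b c + u₃ • Lx3 a b c) =
      ((u₁ : ZMod a), (u₂ : ZMod b), (u₃ : ZMod c)) := by
  simp [Lresidue, Lx1, Lx2, Lx3]

end Invariants

lemma Lle_zero_zsmul_Lx (a b c n₁ n₂ n₃ : ℕ) :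
    Lle a b c 0 ((n₁ : ℤ) • Lx1 a b c + (n₂ : ℤ) • Lx2 a b c + (n₃ : ℤ) • Lx3 a b c) :=
  ⟨n₁, n₂, n₃, sub_zero _⟩

lemma Lle_Ldelta_iff {a b c : ℕ} (ha : 0 < a) (hb : 0 < b) (hc : 0 < c) {n₁ n₂ n₃ : ℕ} :
    Lle a b c ((n₁ : ℤ) • Lx1 a b c + (n₂ : ℤ) • Lx2 a b c + (n₃ : ℤ) • Lx3 a b c) (Ldelta a b c) ↔
      n₁ + 2 ≤ a ∧ n₂ + 2 ≤ b ∧ n₃ + 2 ≤ c := by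
  refine ⟨fun ⟨t₁, t₂, t₃, ht⟩ => ?_, fun ⟨h₁, h₂, h₃⟩ => ⟨a - 2 - n₁, b - 2 - n₂, c - 2 - n₃, ?_⟩⟩
  · replace ht : ((a : ℤ) - 2 - n₁) • Lx1 a b c + ((b : ℤ) - 2 - n₂) • Lx2 a b c +
        ((c : ℤ) - 2 - n₃) • Lx3 a b c =
          (t₁ : ℤ) • Lx1 a b c + (t₂ : ℤ) • Lx2 a b c + (t₃ : ℤ) • Lx3 a b c := by
      rw [← ht, Ldelta_eq]; module
    have hdeg := congrArg (Ldegree a b c) ht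
    have hres := congrArg (Lresidue a b c) ht
    rw [Ldegree_zsmul_Lx, Ldegree_zsmul_Lx] at hdeg
    simp only [Lresidue_zsmul_Lx, Prod.mk.injEq, ZMod.intCast_eq_intCast_iff_dvd_sub] at hres
    obtain ⟨⟨s₁, hs₁⟩, ⟨s₂, hs₂⟩, ⟨s₃, hs₃⟩⟩ := hres
    -- `nᵢ + tᵢ + 2 = pᵢ (sᵢ + 1)` with `sᵢ ≥ 0`, and the degree forces `∑ sᵢ = 0`.
    have hs₁0 : 0 ≤ s₁ := by nlinarith
    have hs₂0 : 0 ≤ s₂ := by nlinarith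
    have hs₃0 : 0 ≤ s₃ := by nlinarith
    have hsum : (a * b * c : ℤ) * (s₁ + s₂ + s₃) = 0 := by
      linear_combination -((b * c : ℤ) * hs₁ + (a * c : ℤ) * hs₂ + (a * b : ℤ) * hs₃) - hdeg
    have hsum0 : s₁ + s₂ + s₃ = 0 := (mul_eq_zero.mp hsum).resolve_left (by positivity)
    obtain rfl : s₁ = 0 := by linarith
    obtain rfl : s₂ = 0 := by linarith
    obtain rfl : s₃ = 0 := by linarith
    omega
  · rw [Ldelta_eq]
    push_cast [Nat.cast_sub (by omega : 2 ≤ a), Nat.cast_sub (by omega : 2 ≤ b),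
      Nat.cast_sub (by omega : 2 ≤ c), Nat.cast_sub (by omega : n₁ ≤ a - 2),
      Nat.cast_sub (by omega : n₂ ≤ b - 2), Nat.cast_sub (by omega : n₃ ≤ c - 2)]
    module

lemma two_Lx1_add_Lx2_not_mem_shift_cuboid_three :
    ¬ (∃ x : LGrp 3 3 3, (Lle 3 3 3 0 x ∧ Lle 3 3 3 x (Ldelta 3 3 3)) ∧
        ∃ m k : ℤ, (2 : ℤ) • Lx1 3 3 3 + Lx2 3 3 3
          = x + (m • Lcan 3 3 3 + k • Lomega 3 3 3)) := by
  rintro ⟨x, ⟨⟨n₁, n₂, n₃, hx⟩, hδ⟩, m, k, hy⟩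
  rw [sub_zero] at hx
  subst hx
  have hcube : n₁ ≤ 1 ∧ n₂ ≤ 1 ∧ n₃ ≤ 1 := by
    have := (Lle_Ldelta_iff (by norm_num) (by norm_num) (by norm_num)).mp hδ
    omega
  obtain ⟨h₁, h₂, h₃⟩ := hcube
  replace hy : (2 : ℤ) • Lx1 3 3 3 + (1 : ℤ) • Lx2 3 3 3 + (0 : ℤ) • Lx3 3 3 3 =
      ((n₁ : ℤ) + 3 * m + 2 * k) • Lx1 3 3 3 + ((n₂ : ℤ) - k) • Lx2 3 3 3 +
        ((n₃ : ℤ) - k) • Lx3 3 3 3 := by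
    rw [← sub_eq_zero] at hy ⊢
    rw [← hy, Lomega, Lcan]
    module
  have hres := congrArg (Lresidue 3 3 3) hy
  simp only [Lresidue_zsmul_Lx, Prod.mk.injEq, ZMod.intCast_eq_intCast_iff_dvd_sub] at hres
  rcases (by omega : k % 3 = 0 ∨ k % 3 = 1 ∨ k % 3 = 2) with hk | hk | hk <;> omega

/-- For weight type (a,b,c) with a,b,c ≥ 3 and (a,b,c) ≠ (3,3,3): with U = ℤc⃗+ℤω
    and Φ = {x : 0 ≤ x ≤ δ⃗} one has Φ + U = L; for (3,3,3) this fails since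
    2x₁ + x₂ ∉ Φ + U. -/
theorem shift_cuboid_abc (a b c : ℕ) (ha : 3 ≤ a) (hb : 3 ≤ b) (hc : 3 ≤ c) :
    (¬ (a = 3 ∧ b = 3 ∧ c = 3) →
      ∀ y : LGrp a b c, ∃ x : LGrp a b c,
        (Lle a b c 0 x ∧ Lle a b c x (Ldelta a b c)) ∧
        ∃ m k : ℤ, y = x + (m • Lcan a b c + k • Lomega a b c)) ∧
    ¬ (∃ x : LGrp 3 3 3, (Lle 3 3 3 0 x ∧ Lle 3 3 3 x (Ldelta 3 3 3)) ∧
        ∃ m k : ℤ, (2 : ℤ) • Lx1 3 3 3 + Lx2 3 3 3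
          = x + (m • Lcan 3 3 3 + k • Lomega 3 3 3)) := by
  refine ⟨fun hne y => ?_, two_Lx1_add_Lx2_not_mem_shift_cuboid_three⟩
  have ha' : 0 < a := by omega
  have hb' : 0 < b := by omega
  have hc' : 0 < c := by omega
  obtain ⟨⟨u₁, u₂, u₃⟩, rfl⟩ := QuotientAddGroup.mk_surjective y
  obtain ⟨k, hk₁, hk₂, hk₃⟩ := Int.exists_not_modEq_of_mul_add_mul_add_mul_lt ha' hb' hc'
    (mul_add_mul_add_mul_lt_mul_mul ha hb hc hne) (-1 - u₁) (-1 - u₂) (-1 - u₃)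
  obtain ⟨q₁, ℓ₁, hℓ₁, h₁⟩ := Int.exists_add_eq_mul_add_of_not_modEq ha' hk₁
  obtain ⟨q₂, ℓ₂, hℓ₂, h₂⟩ := Int.exists_add_eq_mul_add_of_not_modEq hb' hk₂
  obtain ⟨q₃, ℓ₃, hℓ₃, h₃⟩ := Int.exists_add_eq_mul_add_of_not_modEq hc' hk₃
  refine ⟨_, ⟨Lle_zero_zsmul_Lx a b c ℓ₁ ℓ₂ ℓ₃, (Lle_Ldelta_iff ha' hb' hc').mpr ⟨hℓ₁, hℓ₂, hℓ₃⟩⟩,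
    q₁ + q₂ + q₃ - k, k, ?_⟩
  rw [mk_eq_zsmul_Lx]
  exact zsmul_Lx_eq_add a b c _ _ _ _ _ _ _ _ _ k h₁ h₂ h₃
end

section
/- Let (p₁,p₂,p₃) be a weight triple with all pᵢ ≥ 2, and L = L(p₁,p₂,p₃). Write x̄ᵢ := xᵢ + ω where ω is the dualizing element. If x̄₃ + x̄₃ = 0 in L, then p₁ = 2 and p₂ = 2. Moreover, x̄₁ + x̄₂ = 0 is impossible (for any weights pᵢ ≥ 2). -/
/-!
An element of `ℤ³` vanishes in `L(a,b,c)` exactly when it is `m • (a,-b,0) + n • (0,b,-c)`, i.e. has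
coordinates `(m a, (n - m) b, -n c)`. With `ω = (p₁ - 1, -1, -1)` one gets `2 x̄₃ = (2p₁ - 2, -2, 0)`
and `x̄₁ + x̄₂ = (2p₁ - 1, -1, -2)`. In the first case the last coordinate forces `n = 0`, so `p₂ ∣ 2`,
hence `p₂ = 2`, `m = 1` and then `p₁ = 2`; in the second the middle coordinate gives `p₂ ∣ 1`.
-/

lemma LGrp.mk_eq_zero_iff {a b c : ℕ} {u v w : ℤ} :
    (QuotientAddGroup.mk (u, v, w) : LGrp a b c) = 0 ↔
      ∃ m n : ℤ, u = m * a ∧ v = (n - m) * b ∧ w = -(n * c) := by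
  rw [QuotientAddGroup.eq_zero_iff, LRel, AddSubgroup.mem_closure_pair]
  refine exists₂_congr fun m n => ?_
  simp only [Prod.ext_iff, Prod.smul_mk, Prod.mk_add_mk, smul_eq_mul]
  constructor <;> rintro ⟨h1, h2, h3⟩ <;> refine ⟨?_, ?_, ?_⟩ <;> linarith

lemma Lomega_eq_mk (a b c : ℕ) :
    Lomega a b c = QuotientAddGroup.mk ((a : ℤ) - 1, -1, -1) := by
  simp only [Lomega, Lcan, Lx1, Lx2, Lx3, ← QuotientAddGroup.mk_zsmul, ← QuotientAddGroup.mk_add,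
    ← QuotientAddGroup.mk_sub]
  congr 1
  simp

lemma two_xbar3_eq_mk (a b c : ℕ) :
    (Lx3 a b c + Lomega a b c) + (Lx3 a b c + Lomega a b c) =
      QuotientAddGroup.mk (2 * (a : ℤ) - 2, -2, 0) := by
  rw [Lomega_eq_mk, Lx3, ← QuotientAddGroup.mk_add, ← QuotientAddGroup.mk_add]
  congr 1
  simp only [Prod.mk_add_mk, Prod.mk.injEq]
  refine ⟨by ring, by norm_num, by norm_num⟩

lemma xbar1_add_xbar2_eq_mk (a b c : ℕ) :
    (Lx1 a b c + Lomega a b c) + (Lx2 a b c + Lomega a b c) =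
      QuotientAddGroup.mk (2 * (a : ℤ) - 1, -1, -2) := by
  rw [Lomega_eq_mk, Lx1, Lx2, ← QuotientAddGroup.mk_add, ← QuotientAddGroup.mk_add,
    ← QuotientAddGroup.mk_add]
  congr 1
  simp only [Prod.mk_add_mk, Prod.mk.injEq]
  refine ⟨by ring, by norm_num, by norm_num⟩

theorem faithful_action_relations_general (p1 p2 p3 : ℕ) (h2 : 2 ≤ p2)
    (h3 : 2 ≤ p3) :
    ((Lx3 p1 p2 p3 + Lomega p1 p2 p3) + (Lx3 p1 p2 p3 + Lomega p1 p2 p3) = 0 →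
      p1 = 2 ∧ p2 = 2) ∧
    (Lx1 p1 p2 p3 + Lomega p1 p2 p3) + (Lx2 p1 p2 p3 + Lomega p1 p2 p3) ≠ 0 := by
  constructor
  · intro h
    obtain ⟨m, n, hu, hv, hw⟩ := LGrp.mk_eq_zero_iff.mp (two_xbar3_eq_mk p1 p2 p3 ▸ h)
    have hn : n = 0 := by
      have : n * p3 = 0 := by linarith
      simpa [show p3 ≠ 0 by omega] using this
    subst hn
    have hp2 : p2 = 2 := by
      have hdvd : (p2 : ℤ) ∣ 2 := ⟨m, by linear_combination -hv⟩
      exact le_antisymm (Nat.le_of_dvd two_pos (Int.natCast_dvd_natCast.mp hdvd)) h2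
    subst hp2
    have hm : m = 1 := by push_cast at hv; linarith
    subst hm
    exact ⟨by omega, rfl⟩
  · intro h
    obtain ⟨m, n, -, hv, -⟩ := LGrp.mk_eq_zero_iff.mp (xbar1_add_xbar2_eq_mk p1 p2 p3 ▸ h)
    have hdvd : (p2 : ℤ) ∣ 1 := ⟨m - n, by linear_combination -hv⟩
    have hp2 : p2 = 1 := Nat.dvd_one.mp (Int.natCast_dvd_natCast.mp hdvd)
    omega

/-- With x̄ᵢ = xᵢ + ω: if x̄₃ + x̄₃ = 0 in L(p₁,p₂,p₃) then p₁ = 2 and p₂ = 2;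
    moreover x̄₁ + x̄₂ = 0 is impossible. -/
theorem faithful_action_relations (p1 p2 p3 : ℕ) (h1 : 2 ≤ p1) (h2 : 2 ≤ p2)
    (h3 : 2 ≤ p3) :
    ((Lx3 p1 p2 p3 + Lomega p1 p2 p3) + (Lx3 p1 p2 p3 + Lomega p1 p2 p3) = 0 →
      p1 = 2 ∧ p2 = 2) ∧
    (Lx1 p1 p2 p3 + Lomega p1 p2 p3) + (Lx2 p1 p2 p3 + Lomega p1 p2 p3) ≠ 0 :=
  faithful_action_relations_general p1 p2 p3 h2 h3
end
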